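/- Let C ⊆ F_2^n be a singly-even self-dual code with shadow S(C), and let χ = √2·s for some fixed s ∈ S(C). Then the shadow of the lattice, S(Λ(C)) = Λ(C) + χ/2, equals the Construction A set of the code shadow: S(Λ(C)) = Λ(S(C)). -/

import Mathlib

open scoped BigOperators

/-- Construction A lattice of a code `C ⊆ 𝔽_p^n`. -/
noncomputable def constructionA (p n : ℕ) (C : Set (Fin n → ZMod p)) : Set (Fin n → ℝ) :=
  {x | ∃ v : Fin n → ℤ, (∀ i, x i = (v i : ℝ) / Real.sqrt p) ∧ (fun i => ((v i : ZMod p))) ∈ C}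

/-- Dual code `C^⊥`. -/
def dualCode (p n : ℕ) (C : Set (Fin n → ZMod p)) : Set (Fin n → ZMod p) :=
  {c' | ∀ c ∈ C, ∑ i, c i * c' i = 0}

/-- Hamming weight of a codeword. -/
def hammingWt {p n : ℕ} (c : Fin n → ZMod p) : ℕ :=
  (Finset.univ.filter fun i => c i ≠ 0).card

/-- The doubly-even part `C₀` of a binary code. -/
def doublyEvenPart (n : ℕ) (C : Set (Fin n → ZMod 2)) : Set (Fin n → ZMod 2) :=
  {c | c ∈ C ∧ hammingWt c % 4 = 0}

/-- The shadow `S(C) = C₀^⊥ \ C` of a binary code `C`. -/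
def shadowCode (n : ℕ) (C : Set (Fin n → ZMod 2)) : Set (Fin n → ZMod 2) :=
  dualCode 2 n (doublyEvenPart n C) \ C

/-!
A vector `t` lies in the shadow of `C` exactly when `c ⬝ᵥ t = [wt c ≡ 2 mod 4]` for all `c ∈ C`:
the doubly-even codewords are orthogonal to `t` by definition, and if `t` were orthogonal to a
singly-even `c` it would be orthogonal to all of `C` (every other singly-even `c'` differs from `c`
by a doubly-even word), hence in `C^⊥ = C`. So any two shadow vectors have the same inner products
with `C`, their difference lies in `C^⊥ = C`, and `S(C) = C + s`. Construction A turns the coset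
`C + s` into the translate `Λ(C) + s/√2`, and `s/√2 = χ/2`.
-/

open Matrix

section Code

variable {n : ℕ}

theorem mem_dualCode_iff {p : ℕ} {K : Set (Fin n → ZMod p)} {u : Fin n → ZMod p} :
    u ∈ dualCode p n K ↔ ∀ c ∈ K, c ⬝ᵥ u = 0 :=
  Iff.rfl

theorem dotProduct_eq_card_filter (c d : Fin n → ZMod 2) :
    c ⬝ᵥ d = ((Finset.univ.filter fun i => c i ≠ 0 ∧ d i ≠ 0).card : ZMod 2) := by
  simp only [dotProduct, Finset.card_filter, Nat.cast_sum]
  refine Finset.sum_congr rfl fun i _ => ?_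
  generalize c i = a
  generalize d i = b
  revert a b
  decide

theorem hammingWt_add_add_two_mul_card_filter (c d : Fin n → ZMod 2) :
    hammingWt (c + d) + 2 * (Finset.univ.filter fun i => c i ≠ 0 ∧ d i ≠ 0).card =
      hammingWt c + hammingWt d := by
  simp only [hammingWt, Finset.card_filter, Finset.mul_sum, ← Finset.sum_add_distrib,
    Pi.add_apply]
  refine Finset.sum_congr rfl fun i _ => ?_
  generalize c i = a
  generalize d i = b
  revert a b
  decide

theorem two_dvd_hammingWt_of_dotProduct_self_eq_zero {c : Fin n → ZMod 2} (h : c ⬝ᵥ c = 0) :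
    2 ∣ hammingWt c := by
  rw [dotProduct_eq_card_filter] at h
  simpa [hammingWt] using (ZMod.natCast_eq_zero_iff _ 2).mp h

theorem hammingWt_add_mod_four_of_dotProduct_eq_zero {c d : Fin n → ZMod 2} (h : c ⬝ᵥ d = 0) :
    hammingWt (c + d) % 4 = (hammingWt c + hammingWt d) % 4 := by
  rw [dotProduct_eq_card_filter, ZMod.natCast_eq_zero_iff] at h
  have := hammingWt_add_add_two_mul_card_filter c d
  omega

variable {C : Submodule (ZMod 2) (Fin n → ZMod 2)}

theorem mem_dualCode_of_dotProduct_singlyEven_eq_zero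
    (hC : (C : Set (Fin n → ZMod 2)) ⊆ dualCode 2 n C) {u c : Fin n → ZMod 2}
    (hu : u ∈ dualCode 2 n (doublyEvenPart n C)) (hc : c ∈ C) (hc2 : hammingWt c % 4 = 2)
    (hcu : c ⬝ᵥ u = 0) : u ∈ dualCode 2 n C := by
  rw [mem_dualCode_iff]
  intro c' hc'
  have heven : 2 ∣ hammingWt c' := two_dvd_hammingWt_of_dotProduct_self_eq_zero (hC hc' c' hc')
  by_cases hc'0 : hammingWt c' % 4 = 0
  · exact hu c' ⟨hc', hc'0⟩
  · have hsum : hammingWt (c + c') % 4 = 0 := by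
      rw [hammingWt_add_mod_four_of_dotProduct_eq_zero (hC hc' c hc)]
      omega
    have h : (c + c') ⬝ᵥ u = 0 := hu (c + c') ⟨C.add_mem hc hc', hsum⟩
    rwa [add_dotProduct, hcu, zero_add] at h

theorem dotProduct_eq_ite_of_mem_shadowCode
    (hsd : (C : Set (Fin n → ZMod 2)) = dualCode 2 n (C : Set (Fin n → ZMod 2)))
    {u c : Fin n → ZMod 2} (hu : u ∈ shadowCode n C) (hc : c ∈ C) :
    c ⬝ᵥ u = if hammingWt c % 4 = 2 then 1 else 0 := by
  have heven : 2 ∣ hammingWt c :=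
    two_dvd_hammingWt_of_dotProduct_self_eq_zero ((hsd.subset hc) c hc)
  split_ifs with hc2
  · have hne : c ⬝ᵥ u ≠ 0 := fun hcu =>
      hu.2 (hsd ▸ mem_dualCode_of_dotProduct_singlyEven_eq_zero hsd.subset hu.1 hc hc2 hcu)
    revert hne
    generalize c ⬝ᵥ u = a
    revert a
    decide
  · exact hu.1 c ⟨hc, by omega⟩

theorem mem_shadowCode_iff_sub_mem
    (hsd : (C : Set (Fin n → ZMod 2)) = dualCode 2 n (C : Set (Fin n → ZMod 2)))
    {s : Fin n → ZMod 2} (hs : s ∈ shadowCode n C) {t : Fin n → ZMod 2} :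
    t ∈ shadowCode n C ↔ t - s ∈ C := by
  constructor
  · intro ht
    rw [← SetLike.mem_coe, hsd, mem_dualCode_iff]
    intro c hc
    rw [dotProduct_sub, dotProduct_eq_ite_of_mem_shadowCode hsd ht hc,
      dotProduct_eq_ite_of_mem_shadowCode hsd hs hc, sub_self]
  · intro hts
    refine ⟨fun d hd => ?_, fun ht => hs.2 ?_⟩
    · have h : d ⬝ᵥ (t - s) = 0 := (hsd.subset hts) d hd.1
      have hds : d ⬝ᵥ s = 0 := hs.1 d hd
      rwa [dotProduct_sub, hds, sub_zero] at h
    · simpa using C.sub_mem ht hts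

end Code

theorem image_add_constructionA {p n : ℕ} [NeZero p] (K : Set (Fin n → ZMod p))
    (s : Fin n → ZMod p) :
    (· + fun i => ((s i).val : ℝ) / Real.sqrt p) '' constructionA p n K =
      constructionA p n ((· - s) ⁻¹' K) := by
  ext x
  constructor
  · rintro ⟨l, ⟨v, hv, hvK⟩, rfl⟩
    refine ⟨v + fun i => ((s i).val : ℤ), fun i => ?_, ?_⟩
    · simp only [Pi.add_apply, hv i]
      push_cast
      ring
    · rw [Set.mem_preimage]
      convert hvK using 1
      funext i
      simp
  · rintro ⟨w, hw, hwK⟩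
    refine ⟨x - fun i => ((s i).val : ℝ) / Real.sqrt p, ⟨w - fun i => ((s i).val : ℤ),
      fun i => ?_, ?_⟩, sub_add_cancel _ _⟩
    · simp only [Pi.sub_apply, hw i]
      push_cast
      ring
    · rw [Set.mem_preimage] at hwK
      convert hwK using 1
      funext i
      simp

theorem lattice_shadow_eq_code_shadow_general (n : ℕ) (C : Submodule (ZMod 2) (Fin n → ZMod 2))
    (hsd : (C : Set (Fin n → ZMod 2)) = dualCode 2 n (C : Set (Fin n → ZMod 2)))
    (s : Fin n → ZMod 2) (hs : s ∈ shadowCode n (C : Set (Fin n → ZMod 2))) :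
    {x : Fin n → ℝ | ∃ l ∈ constructionA 2 n (C : Set (Fin n → ZMod 2)),
        x = l + (fun i => Real.sqrt 2 * ((s i).val : ℝ) / 2)} =
      constructionA 2 n (shadowCode n (C : Set (Fin n → ZMod 2))) := by
  have hshadow : shadowCode n C = (· - s) ⁻¹' C :=
    Set.ext fun t => mem_shadowCode_iff_sub_mem hsd hs
  have hχ : (fun i => Real.sqrt 2 * ((s i).val : ℝ) / 2) =
      fun i => ((s i).val : ℝ) / Real.sqrt (2 : ℕ) := by
    funext i
    generalize ((s i).val : ℝ) = a
    field_simp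
    linear_combination a * Real.mul_self_sqrt zero_le_two
  rw [hshadow, ← image_add_constructionA, hχ]
  ext x
  simp only [Set.mem_ofPred_eq, Set.mem_image, eq_comm]

/-- For a singly-even self-dual binary code `C` with shadow `S(C)` and `χ = √2·s` for a
fixed `s ∈ S(C)`, the lattice shadow `S(Λ(C)) = Λ(C) + χ/2` equals the Construction A
set of the code shadow: `S(Λ(C)) = Λ(S(C))`. -/
theorem lattice_shadow_eq_code_shadow (n : ℕ) (C : Submodule (ZMod 2) (Fin n → ZMod 2))
    (hsd : (C : Set (Fin n → ZMod 2)) = dualCode 2 n (C : Set (Fin n → ZMod 2)))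
    (hse : ∃ c ∈ C, hammingWt c % 4 = 2)
    (s : Fin n → ZMod 2) (hs : s ∈ shadowCode n (C : Set (Fin n → ZMod 2))) :
    {x : Fin n → ℝ | ∃ l ∈ constructionA 2 n (C : Set (Fin n → ZMod 2)),
        x = l + (fun i => Real.sqrt 2 * ((s i).val : ℝ) / 2)} =
      constructionA 2 n (shadowCode n (C : Set (Fin n → ZMod 2))) :=
  lattice_shadow_eq_code_shadow_general n C hsd s hs
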